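/- arXiv:2103.05896 — 4 statements merged into one kernel-verified Lean document; each statement's English description precedes it below -/
import Mathlib

section
/- Let x_1, ..., x_B ∈ R^d satisfy ‖x_i‖^2 ≤ R for all i, and suppose 2γBR < 1/2 (i.e., γRB < 1/4). Then the sum over all k ≥ 2 and all tuples (i_1,...,i_k) ∈ {1,...,B}^k of (2γ)^k x_{i_1}x_{i_1}^T ⋯ x_{i_k}x_{i_k}^T is PSD-dominated by 2γ · (4γBR/(1 − 4γBR)) · Σ_{i=1}^B x_i x_i^T. -/
/-!
For a tuple `(i₀, …, iₘ)` the product `x_{i₀}x_{i₀}ᵀ ⋯ x_{iₘ}x_{iₘ}ᵀ` has quadratic form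
`⟨v, x_{i₀}⟩ (∏ⱼ ⟨x_{iⱼ}, x_{iⱼ₊₁}⟩) ⟨x_{iₘ}, v⟩`, which `|⟨xᵢ, xⱼ⟩| ≤ R` and AM-GM bound by
`R^m (⟨v, x_{i₀}⟩² + ⟨v, x_{iₘ}⟩²) / 2`. Summing over all tuples, the order-`m+1` term is
dominated by `(BR)^m Σᵢ xᵢxᵢᵀ` in the Loewner order, so with `q = 2γBR` the whole series is
dominated by `2γ q/(1-q) Σᵢ xᵢxᵢᵀ`, and `q/(1-q) ≤ 2q/(1-2q)`. The series converges because the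
Frobenius norm is submultiplicative.
-/

open Matrix

section RankOneProducts

variable {n : Type*} [Fintype n] {R : ℝ}

lemma abs_dotProduct_le_of_dotProduct_self_le {u w : n → ℝ} (hu : u ⬝ᵥ u ≤ R)
    (hw : w ⬝ᵥ w ≤ R) : |u ⬝ᵥ w| ≤ R := by
  have hsub : 0 ≤ (u - w) ⬝ᵥ (u - w) := by simpa using dotProduct_self_star_nonneg (u - w)
  have hadd : 0 ≤ (u + w) ⬝ᵥ (u + w) := by simpa using dotProduct_self_star_nonneg (u + w)
  simp only [sub_dotProduct, dotProduct_sub, add_dotProduct, dotProduct_add,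
    dotProduct_comm w u] at hsub hadd
  exact abs_le.mpr ⟨by linarith, by linarith⟩

variable [DecidableEq n]

/-- The product telescopes: `u₀u₀ᵀ ⋯ uₘuₘᵀ v = (∏ⱼ ⟨uⱼ, uⱼ₊₁⟩) ⟨uₘ, v⟩ • u₀`. -/
lemma exists_prod_vecMulVec_mulVec (hR : 0 ≤ R) {m : ℕ} (u : Fin (m + 1) → n → ℝ)
    (hu : ∀ j, u j ⬝ᵥ u j ≤ R) (v : n → ℝ) :
    ∃ c : ℝ, (List.ofFn fun j => vecMulVec (u j) (u j)).prod *ᵥ v = c • u 0 ∧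
      |c| ≤ R ^ m * |u (Fin.last m) ⬝ᵥ v| := by
  induction m with
  | zero => exact ⟨u 0 ⬝ᵥ v, by simp [vecMulVec_mulVec], by simp⟩
  | succ m ih =>
    obtain ⟨c, hc, hcle⟩ := ih (fun j => u j.succ) (fun j => hu j.succ)
    refine ⟨(u 0 ⬝ᵥ u 1) * c, ?_, ?_⟩
    · rw [List.ofFn_succ, List.prod_cons, ← mulVec_mulVec, hc, mulVec_smul, vecMulVec_mulVec,
        op_smul_eq_smul, smul_smul, mul_comm]
      rfl
    · rw [abs_mul, pow_succ', mul_assoc]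
      exact mul_le_mul (abs_dotProduct_le_of_dotProduct_self_le (hu 0) (hu 1))
        (by simpa using hcle) (abs_nonneg c) hR

lemma abs_dotProduct_prod_vecMulVec_mulVec_le (hR : 0 ≤ R) {m : ℕ} (u : Fin (m + 1) → n → ℝ)
    (hu : ∀ j, u j ⬝ᵥ u j ≤ R) (v : n → ℝ) :
    |v ⬝ᵥ (List.ofFn fun j => vecMulVec (u j) (u j)).prod *ᵥ v| ≤
      R ^ m / 2 * ((u 0 ⬝ᵥ v) ^ 2 + (u (Fin.last m) ⬝ᵥ v) ^ 2) := by
  obtain ⟨c, hc, hcle⟩ := exists_prod_vecMulVec_mulVec hR u hu v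
  rw [hc, dotProduct_smul, smul_eq_mul, abs_mul, dotProduct_comm]
  have amgm : |u (Fin.last m) ⬝ᵥ v| * |u 0 ⬝ᵥ v| ≤
      ((u 0 ⬝ᵥ v) ^ 2 + (u (Fin.last m) ⬝ᵥ v) ^ 2) / 2 := by
    nlinarith [sq_abs (u 0 ⬝ᵥ v), sq_abs (u (Fin.last m) ⬝ᵥ v),
      sq_nonneg (|u 0 ⬝ᵥ v| - |u (Fin.last m) ⬝ᵥ v|)]
  calc |c| * |u 0 ⬝ᵥ v| ≤ R ^ m * |u (Fin.last m) ⬝ᵥ v| * |u 0 ⬝ᵥ v| := by gcongr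
    _ ≤ R ^ m * (((u 0 ⬝ᵥ v) ^ 2 + (u (Fin.last m) ⬝ᵥ v) ^ 2) / 2) := by
      rw [mul_assoc]; gcongr
    _ = _ := by ring

lemma transpose_prod_vecMulVec {m : ℕ} (u : Fin m → n → ℝ) :
    (List.ofFn fun j => vecMulVec (u j) (u j)).prodᵀ =
      (List.ofFn fun j => vecMulVec (u j.rev) (u j.rev)).prod := by
  rw [transpose_list_prod, List.map_ofFn, List.ofFn_eq_map, List.ofFn_eq_map, ← List.map_reverse,
    List.finRange_reverse, List.map_map]
  congr 2
  ext j : 1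
  simp [transpose_vecMulVec]

end RankOneProducts

lemma sum_fin_fun_apply {B m : ℕ} (f : Fin B → ℝ) (j : Fin (m + 1)) :
    ∑ idx : Fin (m + 1) → Fin B, f (idx j) = B ^ m * ∑ i, f i := by
  simpa [Fintype.piFinset_univ] using Fintype.sum_piFinset_apply f Finset.univ j

lemma posSemidef_smul_sub_tsum {n : Type*} [Fintype n] {S : Matrix n n ℝ}
    {T : ℕ → Matrix n n ℝ} {a : ℕ → ℝ} {b : ℝ}
    (hS : S.PosSemidef) (hT : ∀ k, (T k).IsHermitian) (hTs : Summable T) (ha : Summable a)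
    (hab : ∑' k, a k ≤ b) (hTa : ∀ k v, v ⬝ᵥ T k *ᵥ v ≤ a k * (v ⬝ᵥ S *ᵥ v)) :
    (b • S - ∑' k, T k).PosSemidef := by
  have hsumT : (∑' k, T k).IsHermitian := by
    rw [IsHermitian, conjTranspose_tsum]
    exact tsum_congr hT
  refine posSemidef_iff_dotProduct_mulVec.mpr
    ⟨(hS.1.smul (IsSelfAdjoint.all b)).sub hsumT, fun v => ?_⟩
  let q : Matrix n n ℝ →+ ℝ := AddMonoidHom.mk' (fun M => v ⬝ᵥ M *ᵥ v) fun M N => by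
    simp only [add_mulVec, dotProduct_add]
  have hq : Continuous q :=
    continuous_const.dotProduct (continuous_id.matrix_mulVec continuous_const)
  have hSv : 0 ≤ v ⬝ᵥ S *ᵥ v := by simpa using hS.dotProduct_mulVec_nonneg v
  have hle : v ⬝ᵥ (∑' k, T k) *ᵥ v ≤ (∑' k, a k) * (v ⬝ᵥ S *ᵥ v) := by
    rw [← tsum_mul_right]
    exact hasSum_le (hTa · v) (hTs.hasSum.map q hq) (ha.mul_right _).hasSum
  rw [star_trivial, sub_mulVec, dotProduct_sub, smul_mulVec, dotProduct_smul, smul_eq_mul]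
  nlinarith

section PathSum

variable {n : Type*} [Fintype n] [DecidableEq n] {B : ℕ} {R : ℝ}

def pathSum (x : Fin B → n → ℝ) (k : ℕ) : Matrix n n ℝ :=
  ∑ idx : Fin k → Fin B, (List.ofFn fun j => vecMulVec (x (idx j)) (x (idx j))).prod

lemma isHermitian_pathSum (x : Fin B → n → ℝ) (k : ℕ) : (pathSum x k).IsHermitian := by
  rw [IsHermitian, conjTranspose_eq_transpose_of_trivial, pathSum, transpose_sum]
  simp_rw [transpose_prod_vecMulVec]
  exact Fintype.sum_equiv (Equiv.arrowCongr Fin.revPerm (Equiv.refl _)) _ _ fun idx => rfl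

omit [DecidableEq n] in
lemma posSemidef_sum_vecMulVec_self (x : Fin B → n → ℝ) :
    (∑ i, vecMulVec (x i) (x i)).PosSemidef :=
  posSemidef_sum _ fun i _ => by simpa using posSemidef_vecMulVec_self_star (x i)

omit [DecidableEq n] in
lemma dotProduct_sum_vecMulVec_self_mulVec (x : Fin B → n → ℝ) (v : n → ℝ) :
    v ⬝ᵥ (∑ i, vecMulVec (x i) (x i)) *ᵥ v = ∑ i, (x i ⬝ᵥ v) ^ 2 := by
  simp only [sum_mulVec, dotProduct_sum, vecMulVec_mulVec, op_smul_eq_smul, dotProduct_smul,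
    smul_eq_mul, sq]
  exact Finset.sum_congr rfl fun i _ => by rw [dotProduct_comm v]

/-- The factor `B^m` counts the tuples sharing a given first (or last) index. -/
lemma dotProduct_pathSum_mulVec_le (hR : 0 ≤ R) {x : Fin B → n → ℝ}
    (hx : ∀ i, x i ⬝ᵥ x i ≤ R) (m : ℕ) (v : n → ℝ) :
    v ⬝ᵥ pathSum x (m + 1) *ᵥ v ≤ (B * R) ^ m * (v ⬝ᵥ (∑ i, vecMulVec (x i) (x i)) *ᵥ v) := by
  rw [dotProduct_sum_vecMulVec_self_mulVec, pathSum, sum_mulVec, dotProduct_sum]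
  calc _ ≤ ∑ idx : Fin (m + 1) → Fin B,
          R ^ m / 2 * ((x (idx 0) ⬝ᵥ v) ^ 2 + (x (idx (Fin.last m)) ⬝ᵥ v) ^ 2) :=
        Finset.sum_le_sum fun idx _ => (le_abs_self _).trans <|
          abs_dotProduct_prod_vecMulVec_mulVec_le hR (x ∘ idx) (fun j => hx _) v
    _ = _ := by
      rw [← Finset.mul_sum, Finset.sum_add_distrib, sum_fin_fun_apply (fun i => (x i ⬝ᵥ v) ^ 2),
        sum_fin_fun_apply (fun i => (x i ⬝ᵥ v) ^ 2)]
      ring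

lemma dotProduct_pow_smul_pathSum_mulVec_le {c : ℝ} (hc : 0 ≤ c) (hR : 0 ≤ R)
    {x : Fin B → n → ℝ} (hx : ∀ i, x i ⬝ᵥ x i ≤ R) (k : ℕ) (v : n → ℝ) :
    v ⬝ᵥ (c ^ (k + 2) • pathSum x (k + 2)) *ᵥ v ≤
      c * (c * B * R) ^ (k + 1) * (v ⬝ᵥ (∑ i, vecMulVec (x i) (x i)) *ᵥ v) := by
  rw [smul_mulVec, dotProduct_smul, smul_eq_mul]
  calc c ^ (k + 2) * (v ⬝ᵥ pathSum x (k + 1 + 1) *ᵥ v)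
      ≤ c ^ (k + 2) * ((B * R) ^ (k + 1) * (v ⬝ᵥ (∑ i, vecMulVec (x i) (x i)) *ᵥ v)) := by
        gcongr
        exact dotProduct_pathSum_mulVec_le hR hx (k + 1) v
    _ = _ := by ring

section Frobenius

attribute [local instance] frobeniusNormedAddCommGroup frobeniusNormedRing frobeniusNormedSpace

lemma frobenius_norm_vecMulVec_self_le (u : n → ℝ) : ‖vecMulVec u u‖ ≤ u ⬝ᵥ u := by
  have h : ‖(WithLp.toLp 2 u : EuclideanSpace ℝ n)‖ ^ 2 = u ⬝ᵥ u := by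
    rw [EuclideanSpace.real_norm_sq_eq]; simp [dotProduct, sq]
  rw [vecMulVec_eq Unit, ← h, sq]
  exact (frobenius_norm_mul _ _).trans_eq (by simp)

lemma frobenius_norm_prod_vecMulVec_le {m : ℕ} (u : Fin (m + 1) → n → ℝ)
    (hu : ∀ j, u j ⬝ᵥ u j ≤ R) :
    ‖(List.ofFn fun j => vecMulVec (u j) (u j)).prod‖ ≤ R ^ (m + 1) := by
  refine (List.norm_prod_le' (by simp)).trans ?_
  rw [List.map_ofFn, List.prod_ofFn]
  simpa using Finset.prod_le_prod (s := Finset.univ) (fun j _ => norm_nonneg _) fun j _ =>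
    (frobenius_norm_vecMulVec_self_le (u j)).trans (hu j)

lemma frobenius_norm_pathSum_le {x : Fin B → n → ℝ} (hx : ∀ i, x i ⬝ᵥ x i ≤ R) (m : ℕ) :
    ‖pathSum x (m + 1)‖ ≤ (B * R) ^ (m + 1) := by
  refine (norm_sum_le _ _).trans ?_
  simpa [mul_pow] using Finset.sum_le_sum (s := Finset.univ) fun idx _ =>
    frobenius_norm_prod_vecMulVec_le (x ∘ idx) fun j => hx _

lemma summable_pow_smul_pathSum {c : ℝ} (hc : 0 ≤ c) (hR : 0 ≤ R) {x : Fin B → n → ℝ}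
    (hx : ∀ i, x i ⬝ᵥ x i ≤ R) (hcBR : c * B * R < 1) :
    Summable fun k => c ^ (k + 2) • pathSum x (k + 2) := by
  refine Summable.of_norm_bounded ((summable_nat_add_iff 2).mpr
    (summable_geometric_of_lt_one (by positivity) hcBR)) fun k => ?_
  rw [norm_smul, Real.norm_of_nonneg (by positivity), mul_assoc, mul_pow]
  gcongr
  exact frobenius_norm_pathSum_le hx (k + 1)

end Frobenius

end PathSum

lemma tsum_mul_geometric_succ_le {c q : ℝ} (hc : 0 ≤ c) (hq0 : 0 ≤ q) (hq : q < 1 / 2) :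
    ∑' k : ℕ, c * q ^ (k + 1) ≤ c * (2 * q / (1 - 2 * q)) := by
  have hsum : ∑' k : ℕ, c * q ^ (k + 1) = c * (q / (1 - q)) := by
    simp_rw [pow_succ', ← mul_assoc]
    rw [tsum_mul_left, tsum_geometric_of_lt_one hq0 (by linarith)]
    ring
  rw [hsum]
  gcongr c * ?_
  rw [div_le_div_iff₀ (by linarith) (by linarith)]
  nlinarith

/-- For vectors `x₁,…,x_B` with `‖xᵢ‖² ≤ R` and `2γBR < 1/2`, the sum over all `k ≥ 2` and
tuples `(i₁,…,i_k)` of `(2γ)^k x_{i₁}x_{i₁}ᵀ⋯x_{i_k}x_{i_k}ᵀ` is PSD-dominated by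
`2γ · (4γBR/(1 − 4γBR)) · Σᵢ xᵢxᵢᵀ`. -/
theorem stmt_3 {d B : ℕ} (R γ : ℝ) (hγ : 0 < γ) (hR : 0 ≤ R)
    (x : Fin B → (Fin d → ℝ)) (hx : ∀ i, x i ⬝ᵥ x i ≤ R)
    (hsize : 2 * γ * B * R < 1 / 2) :
    (((2 * γ * (4 * γ * B * R / (1 - 4 * γ * B * R))) •
        ∑ i, vecMulVec (x i) (x i)) -
      ∑' k : ℕ, ∑ idx : Fin (k + 2) → Fin B,
        (2 * γ) ^ (k + 2) •
          (List.ofFn fun j : Fin (k + 2) =>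
            vecMulVec (x (idx j)) (x (idx j))).prod).PosSemidef := by
  simp_rw [← Finset.smul_sum]
  change ((2 * γ * (4 * γ * B * R / (1 - 4 * γ * B * R))) • ∑ i, vecMulVec (x i) (x i) -
    ∑' k : ℕ, (2 * γ) ^ (k + 2) • pathSum x (k + 2)).PosSemidef
  have hc : 0 ≤ 2 * γ := by positivity
  have hq0 : 0 ≤ 2 * γ * B * R := by positivity
  have ha : Summable fun k : ℕ => 2 * γ * (2 * γ * B * R) ^ (k + 1) :=
    (summable_nat_add_iff 1).mpr ((summable_geometric_of_lt_one hq0 (by linarith)).mul_left _)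
  have hab := (tsum_mul_geometric_succ_le hc hq0 hsize).trans_eq
    (show _ = 2 * γ * (4 * γ * B * R / (1 - 4 * γ * B * R)) by ring)
  exact posSemidef_smul_sub_tsum (posSemidef_sum_vecMulVec_self x)
    (fun k => (isHermitian_pathSum x _).smul (.all _))
    (summable_pow_smul_pathSum hc hR hx (by linarith)) ha hab
    (dotProduct_pow_smul_pathSum_mulVec_le hc hR hx)
end

section
/- Let x_0, ..., x_{B-1} ∈ R^d with ‖x_j‖^2 ≤ R for all j and suppose γRB < 1/6. Define H = ∏_{j=0}^{B-1}(I − 2γ x_j x_j^T) (product taken in order). Then I − 4γ(1 + 2γBR/(1−4γBR)) Σ_{j=0}^{B-1} x_j x_j^T ⪯ H^T H ⪯ I − 4γ(1 − 2γBR/(1−4γBR)) Σ_{j=0}^{B-1} x_j x_j^T. -/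
/-!
Write `Aⱼ = xⱼ xⱼᵀ`, `Sₙ = ∑_{j<n} Aⱼ`, `Hₙ` for the partial products and
`Dₙ = Hₙᵀ Hₙ - 1 + 4γ Sₙ` for the deviation of `Hₙᵀ Hₙ` from its first-order expansion.
Since `Hₙ₊₁ = Hₙ M` with `M = 1 - 2γ Aₙ`,
`Dₙ₊₁ = M Dₙ M + 4γ² Aₙ² + 8γ² (Aₙ Sₙ + Sₙ Aₙ) - 16γ³ Aₙ Sₙ Aₙ`.
The rank-one structure and `‖xⱼ‖² ≤ R` control the new terms in the Loewner order:
`Aₙ² ⪯ R Aₙ`, `±(Aₙ Sₙ + Sₙ Aₙ) ⪯ R (n Aₙ + Sₙ)` (expand `(Aₙ ∓ Aⱼ)² ⪰ 0`) and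
`0 ⪯ Aₙ Sₙ Aₙ ⪯ n R² Aₙ` (Cauchy–Schwarz). Hence `±Dₙ ⪯ 4γ δₙ Sₙ` by induction, with
`δₙ = n b / (1 - 2 n b)` and `b = 2γR`; the hypothesis `γRB < 1/6` keeps `δₙ ≤ 1`, which is
what makes the recursion close, and `δ_B` is the constant of the theorem.
-/

open Matrix Finset
open scoped MatrixOrder

section StarOrderedRing

variable {α : Type*} [NonUnitalRing α] [PartialOrder α] [StarRing α] [StarOrderedRing α]
  {a b : α}

theorem IsSelfAdjoint.mul_add_mul_le_mul_self_add_mul_self (ha : IsSelfAdjoint a)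
    (hb : IsSelfAdjoint b) : a * b + b * a ≤ a * a + b * b := by
  have h := star_mul_self_nonneg (a - b)
  rw [star_sub, ha.star_eq, hb.star_eq] at h
  rw [← sub_nonneg]
  convert h using 1
  noncomm_ring

theorem IsSelfAdjoint.neg_mul_add_mul_le_mul_self_add_mul_self (ha : IsSelfAdjoint a)
    (hb : IsSelfAdjoint b) : -(a * b + b * a) ≤ a * a + b * b := by
  have h := star_mul_self_nonneg (a + b)
  rw [star_add, ha.star_eq, hb.star_eq] at h
  rw [← sub_nonneg]
  convert h using 1
  noncomm_ring

end StarOrderedRing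

theorem smul_card_smul_add_sum {ι M : Type*} [Fintype ι] [AddCommMonoid M] [Module ℝ M]
    (r : ℝ) (a : M) (f : ι → M) :
    r • ((Fintype.card ι : ℝ) • a + ∑ i, f i) = ∑ i, r • (a + f i) := by
  rw [← smul_sum, sum_add_distrib, sum_const, card_univ, Nat.cast_smul_eq_nsmul]

namespace Matrix

variable {m ι : Type*} [Fintype m] [Fintype ι] {R : ℝ} {y z : m → ℝ}

theorem vecMulVec_self_nonneg (y : m → ℝ) : 0 ≤ vecMulVec y y :=
  (posSemidef_vecMulVec_self_star y).nonneg

theorem isSelfAdjoint_vecMulVec_self (y : m → ℝ) : IsSelfAdjoint (vecMulVec y y) :=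
  .of_nonneg (vecMulVec_self_nonneg y)

theorem vecMulVec_self_mul_vecMulVec_self (y z : m → ℝ) :
    vecMulVec y y * vecMulVec z z = (y ⬝ᵥ z) • vecMulVec y z := by
  rw [vecMulVec_mul_vecMulVec]
  ext i j
  simp [vecMulVec_apply]
  ring

theorem vecMulVec_self_mul_mul_vecMulVec_self (y : m → ℝ) (X : Matrix m m ℝ) :
    vecMulVec y y * X * vecMulVec y y = (y ⬝ᵥ X *ᵥ y) • vecMulVec y y := by
  rw [vecMulVec_mul, vecMulVec_mul_vecMulVec]
  ext i j
  simp [vecMulVec_apply, dotProduct_mulVec]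
  ring

theorem vecMulVec_self_mul_self_le (hy : y ⬝ᵥ y ≤ R) :
    vecMulVec y y * vecMulVec y y ≤ R • vecMulVec y y := by
  rw [vecMulVec_self_mul_vecMulVec_self]
  exact smul_le_smul_of_nonneg_right hy (vecMulVec_self_nonneg y)

theorem vecMulVec_self_mul_vecMulVec_self_mul_le (hy : y ⬝ᵥ y ≤ R) (hz : z ⬝ᵥ z ≤ R) :
    vecMulVec y y * vecMulVec z z * vecMulVec y y ≤ R ^ 2 • vecMulVec y y := by
  rw [vecMulVec_self_mul_mul_vecMulVec_self, vecMulVec_mulVec, op_smul_eq_smul, dotProduct_smul,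
    smul_eq_mul, dotProduct_comm z y, ← sq]
  refine smul_le_smul_of_nonneg_right ?_ (vecMulVec_self_nonneg y)
  have hcs : (y ⬝ᵥ z) ^ 2 ≤ (y ⬝ᵥ y) * (z ⬝ᵥ z) := by
    simpa only [dotProduct, sq] using sum_mul_sq_le_sq_mul_sq univ y z
  have hy₀ : 0 ≤ y ⬝ᵥ y := by simpa using dotProduct_self_star_nonneg y
  have hz₀ : 0 ≤ z ⬝ᵥ z := by simpa using dotProduct_self_star_nonneg z
  nlinarith [mul_le_mul hy hz hz₀ (hy₀.trans hy)]

theorem vecMulVec_self_mul_add_mul_le (hy : y ⬝ᵥ y ≤ R) (hz : z ⬝ᵥ z ≤ R) :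
    vecMulVec y y * vecMulVec z z + vecMulVec z z * vecMulVec y y
      ≤ R • (vecMulVec y y + vecMulVec z z) := by
  rw [smul_add]
  calc _ ≤ vecMulVec y y * vecMulVec y y + vecMulVec z z * vecMulVec z z :=
        (isSelfAdjoint_vecMulVec_self y).mul_add_mul_le_mul_self_add_mul_self
          (isSelfAdjoint_vecMulVec_self z)
    _ ≤ _ := add_le_add (vecMulVec_self_mul_self_le hy) (vecMulVec_self_mul_self_le hz)

theorem neg_vecMulVec_self_mul_add_mul_le (hy : y ⬝ᵥ y ≤ R) (hz : z ⬝ᵥ z ≤ R) :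
    -(vecMulVec y y * vecMulVec z z + vecMulVec z z * vecMulVec y y)
      ≤ R • (vecMulVec y y + vecMulVec z z) := by
  rw [smul_add]
  calc _ ≤ vecMulVec y y * vecMulVec y y + vecMulVec z z * vecMulVec z z :=
        (isSelfAdjoint_vecMulVec_self y).neg_mul_add_mul_le_mul_self_add_mul_self
          (isSelfAdjoint_vecMulVec_self z)
    _ ≤ _ := add_le_add (vecMulVec_self_mul_self_le hy) (vecMulVec_self_mul_self_le hz)

section Sum

variable {z : ι → m → ℝ}

theorem vecMulVec_self_mul_sum_add_sum_mul_le (hy : y ⬝ᵥ y ≤ R) (hz : ∀ i, z i ⬝ᵥ z i ≤ R) :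
    vecMulVec y y * (∑ i, vecMulVec (z i) (z i)) + (∑ i, vecMulVec (z i) (z i)) * vecMulVec y y
      ≤ R • ((Fintype.card ι : ℝ) • vecMulVec y y + ∑ i, vecMulVec (z i) (z i)) := by
  rw [smul_card_smul_add_sum, mul_sum, sum_mul, ← sum_add_distrib]
  exact sum_le_sum fun i _ => vecMulVec_self_mul_add_mul_le hy (hz i)

theorem neg_le_vecMulVec_self_mul_sum_add_sum_mul (hy : y ⬝ᵥ y ≤ R)
    (hz : ∀ i, z i ⬝ᵥ z i ≤ R) :
    -(R • ((Fintype.card ι : ℝ) • vecMulVec y y + ∑ i, vecMulVec (z i) (z i)))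
      ≤ vecMulVec y y * (∑ i, vecMulVec (z i) (z i))
        + (∑ i, vecMulVec (z i) (z i)) * vecMulVec y y := by
  rw [neg_le, smul_card_smul_add_sum, mul_sum, sum_mul, ← sum_add_distrib, ← sum_neg_distrib]
  exact sum_le_sum fun i _ => neg_vecMulVec_self_mul_add_mul_le hy (hz i)

theorem vecMulVec_self_mul_sum_mul_le (hy : y ⬝ᵥ y ≤ R) (hz : ∀ i, z i ⬝ᵥ z i ≤ R) :
    vecMulVec y y * (∑ i, vecMulVec (z i) (z i)) * vecMulVec y y
      ≤ ((Fintype.card ι : ℝ) * R ^ 2) • vecMulVec y y := by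
  calc _ = ∑ i, vecMulVec y y * vecMulVec (z i) (z i) * vecMulVec y y := by
        rw [mul_sum, sum_mul]
    _ ≤ ∑ _i : ι, R ^ 2 • vecMulVec y y :=
        sum_le_sum fun i _ => vecMulVec_self_mul_vecMulVec_self_mul_le hy (hz i)
    _ = _ := by rw [sum_const, card_univ, ← Nat.cast_smul_eq_nsmul ℝ, smul_smul]

theorem vecMulVec_self_mul_sum_mul_nonneg (y : m → ℝ) (z : ι → m → ℝ) :
    0 ≤ vecMulVec y y * (∑ i, vecMulVec (z i) (z i)) * vecMulVec y y := by
  simpa [(isSelfAdjoint_vecMulVec_self y).star_eq] using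
    star_left_conjugate_nonneg (sum_nonneg fun i _ => vecMulVec_self_nonneg (z i)) (vecMulVec y y)

end Sum

end Matrix

section Deviation

variable {α : Type*} [Ring α] [Algebra ℝ α]

def deviation (γ : ℝ) (G S : α) : α := G - 1 + (4 * γ) • S

theorem one_sub_smul_mul_mul_one_sub_smul (t : ℝ) (A X : α) :
    (1 - t • A) * X * (1 - t • A) = X - t • (A * X + X * A) + (t ^ 2) • (A * X * A) := by
  simp only [sub_mul, mul_sub, one_mul, mul_one, smul_mul_assoc, mul_smul_comm, smul_sub,
    smul_add, smul_smul, mul_assoc]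
  module

theorem deviation_conj (γ : ℝ) (A G S : α) :
    deviation γ ((1 - (2 * γ) • A) * G * (1 - (2 * γ) • A)) (S + A) =
      (1 - (2 * γ) • A) * deviation γ G S * (1 - (2 * γ) • A) + (4 * γ ^ 2) • (A * A)
        + (8 * γ ^ 2) • (A * S + S * A) - (16 * γ ^ 3) • (A * S * A) := by
  simp only [deviation, mul_add, add_mul, sub_mul, mul_sub, one_mul, mul_one, smul_mul_assoc,
    mul_smul_comm, smul_sub, smul_add, smul_smul, mul_assoc]
  module

variable [PartialOrder α] [StarRing α] [StarOrderedRing α] [StarModule ℝ α] [PosSMulMono ℝ α]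
  {γ R e e' k : ℝ} {A G S : α}

theorem deviation_conj_le (hγ : 0 ≤ γ) (hR : 0 ≤ R) (he₀ : 0 ≤ e) (he₁ : e ≤ 1) (hk : 0 ≤ k)
    (hA : 0 ≤ A) (hS : 0 ≤ S) (hAA : A * A ≤ R • A)
    (hAS : A * S + S * A ≤ R • (k • A + S)) (hASA : 0 ≤ A * S * A)
    (hG : deviation γ G S ≤ (4 * γ * e) • S)
    (heS : (1 + 2 * γ * R) * e + 2 * γ * R ≤ e')
    (heA : k * (2 * γ * R) * (1 + 2 * γ * R) * (1 + e) + γ * R ≤ e') :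
    deviation γ ((1 - (2 * γ) • A) * G * (1 - (2 * γ) • A)) (S + A) ≤ (4 * γ * e') • (S + A) := by
  have hM : IsSelfAdjoint (1 - (2 * γ) • A) :=
    (IsSelfAdjoint.one _).sub ((IsSelfAdjoint.all _).smul (IsSelfAdjoint.of_nonneg hA))
  have hγR : 0 ≤ γ * R := mul_nonneg hγ hR
  have hkγR : 0 ≤ k * (γ * R) := mul_nonneg hk hγR
  rw [deviation_conj]
  calc _ ≤ (1 - (2 * γ) • A) * ((4 * γ * e) • S) * (1 - (2 * γ) • A) + (4 * γ ^ 2) • (A * A)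
        + (8 * γ ^ 2) • (A * S + S * A) - (16 * γ ^ 3) • (A * S * A) := by
        gcongr
        exact IsSelfAdjoint.conjugate_le_conjugate hG hM
    _ = (4 * γ * e) • S + (8 * γ ^ 2 * (1 - e)) • (A * S + S * A)
        - (16 * γ ^ 3 * (1 - e)) • (A * S * A) + (4 * γ ^ 2) • (A * A) := by
        rw [mul_smul_comm, smul_mul_assoc, one_sub_smul_mul_mul_one_sub_smul]
        module
    _ ≤ (4 * γ * e) • S + (8 * γ ^ 2 * (1 - e)) • (R • (k • A + S)) - 0
        + (4 * γ ^ 2) • (R • A) := by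
        gcongr
        exact smul_nonneg (mul_nonneg (by positivity) (sub_nonneg.2 he₁)) hASA
    _ = (4 * γ * (e + 2 * γ * R * (1 - e))) • S
        + (4 * γ * (k * (2 * γ * R) * (1 - e) + γ * R)) • A := by
        module
    _ ≤ (4 * γ * e') • S + (4 * γ * e') • A := by
        gcongr
        · nlinarith [mul_nonneg hγR he₀]
        · nlinarith [mul_nonneg hkγR he₀, mul_nonneg hkγR hγR,
            mul_nonneg (mul_nonneg hkγR hγR) he₀]
    _ = _ := (smul_add _ _ _).symm

theorem neg_le_deviation_conj (hγ : 0 ≤ γ) (hR : 0 ≤ R) (he₀ : 0 ≤ e) (hk : 0 ≤ k)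
    (hA : 0 ≤ A) (hS : 0 ≤ S)
    (hAS : -(R • (k • A + S)) ≤ A * S + S * A) (hASA : A * S * A ≤ (k * R ^ 2) • A)
    (hG : -((4 * γ * e) • S) ≤ deviation γ G S)
    (heS : (1 + 2 * γ * R) * e + 2 * γ * R ≤ e')
    (heA : k * (2 * γ * R) * (1 + 2 * γ * R) * (1 + e) + γ * R ≤ e') :
    -((4 * γ * e') • (S + A)) ≤
      deviation γ ((1 - (2 * γ) • A) * G * (1 - (2 * γ) • A)) (S + A) := by
  have hM : IsSelfAdjoint (1 - (2 * γ) • A) :=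
    (IsSelfAdjoint.one _).sub ((IsSelfAdjoint.all _).smul (IsSelfAdjoint.of_nonneg hA))
  have hAA : 0 ≤ A * A := by
    simpa [(IsSelfAdjoint.of_nonneg hA).star_eq] using star_mul_self_nonneg A
  have hγR : 0 ≤ γ * R := mul_nonneg hγ hR
  have hkγR : 0 ≤ k * (γ * R) := mul_nonneg hk hγR
  rw [deviation_conj]
  calc -((4 * γ * e') • (S + A)) = -((4 * γ * e') • S + (4 * γ * e') • A) := by rw [smul_add]
    _ ≤ -((4 * γ * ((1 + 2 * γ * R) * e + 2 * γ * R)) • S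
          + (4 * γ * (k * (2 * γ * R) * (1 + 2 * γ * R) * (1 + e))) • A) := by
        gcongr
        nlinarith
    _ = -((4 * γ * e) • S) + (8 * γ ^ 2 * (1 + e)) • (-(R • (k • A + S)))
          - (16 * γ ^ 3 * (1 + e)) • ((k * R ^ 2) • A) + (4 * γ ^ 2) • (0 : α) := by
        module
    _ ≤ -((4 * γ * e) • S) + (8 * γ ^ 2 * (1 + e)) • (A * S + S * A)
          - (16 * γ ^ 3 * (1 + e)) • (A * S * A) + (4 * γ ^ 2) • (A * A) := by
        gcongr
    _ = (1 - (2 * γ) • A) * (-((4 * γ * e) • S)) * (1 - (2 * γ) • A) + (4 * γ ^ 2) • (A * A)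
          + (8 * γ ^ 2) • (A * S + S * A) - (16 * γ ^ 3) • (A * S * A) := by
        simp only [one_sub_smul_mul_mul_one_sub_smul, mul_neg, neg_mul, mul_smul_comm,
          smul_mul_assoc]
        module
    _ ≤ _ := by
        gcongr
        exact IsSelfAdjoint.conjugate_le_conjugate hG hM

end Deviation

noncomputable def deviationBound (b n : ℝ) : ℝ := n * b / (1 - 2 * n * b)

section DeviationBound

variable {b n : ℝ}

theorem deviationBound_mem_Icc (hb : 0 ≤ b) (hn : 0 ≤ n) (h : 3 * (n * b) ≤ 1) :
    deviationBound b n ∈ Set.Icc 0 1 := by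
  have hD : 0 < 1 - 2 * n * b := by nlinarith [mul_nonneg hn hb]
  unfold deviationBound
  exact ⟨by positivity, by rw [div_le_one hD]; linarith⟩

theorem deviationBound_succ (hb : 0 ≤ b) (hn : 0 ≤ n) (h : 3 * ((n + 1) * b) ≤ 1) :
    (1 + b) * deviationBound b n + b ≤ deviationBound b (n + 1) ∧
      n * b * (1 + b) * (1 + deviationBound b n) + b / 2 ≤ deviationBound b (n + 1) := by
  have hnb : 0 ≤ n * b := mul_nonneg hn hb
  have hD : 0 < 1 - 2 * n * b := by nlinarith
  have hD' : 0 < 1 - 2 * (n + 1) * b := by nlinarith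
  have he : deviationBound b n * (1 - 2 * n * b) = n * b := div_mul_cancel₀ _ hD.ne'
  have he₀ : 0 ≤ deviationBound b n := div_nonneg hnb hD.le
  unfold deviationBound at he he₀ ⊢
  rw [le_div_iff₀ hD', le_div_iff₀ hD']
  constructor
  · nlinarith [mul_nonneg hb he₀, mul_nonneg (mul_nonneg hb hb) he₀]
  · nlinarith [mul_nonneg hb he₀, mul_nonneg (mul_nonneg hb hb) he₀, mul_nonneg hnb hb]

end DeviationBound

section Product

variable {m : Type*} [Fintype m] [DecidableEq m] {γ R : ℝ}

noncomputable def prodOneSubVecMulVec (γ : ℝ) {B : ℕ} (x : Fin B → m → ℝ) : Matrix m m ℝ :=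
  (List.ofFn fun j => 1 - (2 * γ) • vecMulVec (x j) (x j)).prod

theorem prodOneSubVecMulVec_succ (γ : ℝ) {B : ℕ} (x : Fin (B + 1) → m → ℝ) :
    prodOneSubVecMulVec γ x = prodOneSubVecMulVec γ (fun j => x j.castSucc) *
      (1 - (2 * γ) • vecMulVec (x (Fin.last B)) (x (Fin.last B))) := by
  rw [prodOneSubVecMulVec, prodOneSubVecMulVec, List.ofFn_succ', List.prod_concat]

omit [Fintype m] in
theorem transpose_one_sub_smul_vecMulVec_self (t : ℝ) (y : m → ℝ) :
    (1 - t • vecMulVec y y)ᵀ = 1 - t • vecMulVec y y := by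
  rw [transpose_sub, transpose_one, transpose_smul, transpose_vecMulVec]

theorem deviation_transpose_mul_self_prodOneSubVecMulVec (hγ : 0 ≤ γ) {B : ℕ}
    (x : Fin B → m → ℝ) (hx : ∀ j, x j ⬝ᵥ x j ≤ R) (hB : 3 * (B * (2 * γ * R)) ≤ 1) :
    -((4 * γ * deviationBound (2 * γ * R) B) • ∑ j, vecMulVec (x j) (x j)) ≤
        deviation γ ((prodOneSubVecMulVec γ x)ᵀ * prodOneSubVecMulVec γ x)
          (∑ j, vecMulVec (x j) (x j)) ∧
      deviation γ ((prodOneSubVecMulVec γ x)ᵀ * prodOneSubVecMulVec γ x)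
          (∑ j, vecMulVec (x j) (x j)) ≤
        (4 * γ * deviationBound (2 * γ * R) B) • ∑ j, vecMulVec (x j) (x j) := by
  induction B with
  | zero => simp [prodOneSubVecMulVec, deviation]
  | succ B ih =>
    set y := x (Fin.last B)
    set H := prodOneSubVecMulVec γ fun j => x j.castSucc
    have hy : y ⬝ᵥ y ≤ R := hx _
    have hx' : ∀ j : Fin B, x j.castSucc ⬝ᵥ x j.castSucc ≤ R := fun j => hx _
    have hy₀ : 0 ≤ y ⬝ᵥ y := by simpa using dotProduct_self_star_nonneg y
    have hR : 0 ≤ R := hy₀.trans hy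
    have hb : 0 ≤ 2 * γ * R := by positivity
    push_cast at hB
    obtain ⟨ih₁, ih₂⟩ := ih (fun j => x j.castSucc) hx' (by nlinarith)
    obtain ⟨he₀, he₁⟩ := deviationBound_mem_Icc hb B.cast_nonneg (by nlinarith)
    obtain ⟨heS, heA⟩ := deviationBound_succ hb B.cast_nonneg hB
    have hHH : (H * (1 - (2 * γ) • vecMulVec y y))ᵀ * (H * (1 - (2 * γ) • vecMulVec y y))
        = (1 - (2 * γ) • vecMulVec y y) * (Hᵀ * H) * (1 - (2 * γ) • vecMulVec y y) := by
      rw [transpose_mul, transpose_one_sub_smul_vecMulVec_self]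
      simp only [Matrix.mul_assoc]
    have hS : 0 ≤ ∑ j : Fin B, vecMulVec (x j.castSucc) (x j.castSucc) :=
      sum_nonneg fun j _ => vecMulVec_self_nonneg _
    have hAS := vecMulVec_self_mul_sum_add_sum_mul_le hy hx'
    have hAS' := neg_le_vecMulVec_self_mul_sum_add_sum_mul hy hx'
    have hASA := vecMulVec_self_mul_sum_mul_le hy hx'
    rw [Fintype.card_fin] at hAS hAS' hASA
    rw [prodOneSubVecMulVec_succ, Fin.sum_univ_castSucc, hHH, Nat.cast_succ]
    exact ⟨neg_le_deviation_conj hγ hR he₀ B.cast_nonneg (vecMulVec_self_nonneg y) hS hAS' hASA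
        ih₁ heS (by linarith),
      deviation_conj_le hγ hR he₀ he₁ B.cast_nonneg (vecMulVec_self_nonneg y) hS
        (vecMulVec_self_mul_self_le hy) hAS (vecMulVec_self_mul_sum_mul_nonneg _ _) ih₂ heS
        (by linarith)⟩

end Product

theorem stmt_4_general {d B : ℕ} (R γ : ℝ) (hγ : 0 < γ)
    (x : Fin B → (Fin d → ℝ)) (hx : ∀ j, x j ⬝ᵥ x j ≤ R)
    (hsize : γ * R * B < 1 / 6) :
    (((List.ofFn fun j : Fin B => (1 : Matrix (Fin d) (Fin d) ℝ) -
        (2 * γ) • vecMulVec (x j) (x j)).prod)ᵀ *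
      ((List.ofFn fun j : Fin B => (1 : Matrix (Fin d) (Fin d) ℝ) -
        (2 * γ) • vecMulVec (x j) (x j)).prod) -
      ((1 : Matrix (Fin d) (Fin d) ℝ) -
        (4 * γ * (1 + 2 * γ * B * R / (1 - 4 * γ * B * R))) •
          ∑ j, vecMulVec (x j) (x j))).PosSemidef ∧
    (((1 : Matrix (Fin d) (Fin d) ℝ) -
        (4 * γ * (1 - 2 * γ * B * R / (1 - 4 * γ * B * R))) •
          ∑ j, vecMulVec (x j) (x j)) -
      ((List.ofFn fun j : Fin B => (1 : Matrix (Fin d) (Fin d) ℝ) -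
        (2 * γ) • vecMulVec (x j) (x j)).prod)ᵀ *
      ((List.ofFn fun j : Fin B => (1 : Matrix (Fin d) (Fin d) ℝ) -
        (2 * γ) • vecMulVec (x j) (x j)).prod)).PosSemidef := by
  have hδ : 2 * γ * B * R / (1 - 4 * γ * B * R) = deviationBound (2 * γ * R) B := by
    unfold deviationBound
    ring
  obtain ⟨hlower, hupper⟩ :=
    deviation_transpose_mul_self_prodOneSubVecMulVec hγ.le x hx (by linarith)
  unfold deviation prodOneSubVecMulVec at hlower hupper
  rw [hδ, ← nonneg_iff_posSemidef, ← nonneg_iff_posSemidef]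
  constructor
  · convert sub_nonneg.2 hlower using 1
    module
  · convert sub_nonneg.2 hupper using 1
    module

/-- For `x₀,…,x_{B-1}` with `‖x_j‖² ≤ R` and `γRB < 1/6`, the ordered product
`H = ∏_{j}(I − 2γ x_j x_jᵀ)` satisfies
`I − 4γ(1 + 2γBR/(1−4γBR)) Σ_j x_j x_jᵀ ⪯ Hᵀ H ⪯ I − 4γ(1 − 2γBR/(1−4γBR)) Σ_j x_j x_jᵀ`. -/
theorem stmt_4 {d B : ℕ} (R γ : ℝ) (hγ : 0 < γ) (hR : 0 ≤ R)
    (x : Fin B → (Fin d → ℝ)) (hx : ∀ j, x j ⬝ᵥ x j ≤ R)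
    (hsize : γ * R * B < 1 / 6) :
    (((List.ofFn fun j : Fin B => (1 : Matrix (Fin d) (Fin d) ℝ) -
        (2 * γ) • vecMulVec (x j) (x j)).prod)ᵀ *
      ((List.ofFn fun j : Fin B => (1 : Matrix (Fin d) (Fin d) ℝ) -
        (2 * γ) • vecMulVec (x j) (x j)).prod) -
      ((1 : Matrix (Fin d) (Fin d) ℝ) -
        (4 * γ * (1 + 2 * γ * B * R / (1 - 4 * γ * B * R))) •
          ∑ j, vecMulVec (x j) (x j))).PosSemidef ∧
    (((1 : Matrix (Fin d) (Fin d) ℝ) -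
        (4 * γ * (1 - 2 * γ * B * R / (1 - 4 * γ * B * R))) •
          ∑ j, vecMulVec (x j) (x j)) -
      ((List.ofFn fun j : Fin B => (1 : Matrix (Fin d) (Fin d) ℝ) -
        (2 * γ) • vecMulVec (x j) (x j)).prod)ᵀ *
      ((List.ofFn fun j : Fin B => (1 : Matrix (Fin d) (Fin d) ℝ) -
        (2 * γ) • vecMulVec (x j) (x j)).prod)).PosSemidef :=
  stmt_4_general R γ hγ x hx hsize
end

section
/- Let x_0, ..., x_{B-1} ∈ R^d with ‖x_j‖^2 ≤ R for all j and γR < 1/2. Define H_{j:B-1} = ∏_{s=j}^{B-1}(I − 2γ x_s x_s^T) (with H_{B:B-1} = I) and K = Σ_{j=0}^{B-1} H_{j+1:B-1}^T x_j x_j^T H_{j+1:B-1}. Then (I − H_{0:B-1}^T H_{0:B-1})/(4γ) ⪯ K ⪯ (I − H_{0:B-1}^T H_{0:B-1})/(4γ(1−γR)). -/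
/-! Each factor `f_j = I − 2γ x_j x_jᵀ` satisfies `f_jᵀ f_j = I − c_j x_j x_jᵀ` with
`c_j = 4γ(1 − γ‖x_j‖²)`, so `P_j = H_{j:B-1}ᵀ H_{j:B-1}` decreases by `c_j M_j`, where
`M_j = H_{j+1:B-1}ᵀ x_j x_jᵀ H_{j+1:B-1} ⪰ 0`. Telescoping from `P_B = I` down to `P_0 = Hᵀ H`
gives `I − Hᵀ H = ∑ c_j M_j`, while `K = ∑ M_j`; the theorem is then the coefficient bound
`4γ(1 − γR) ≤ c_j ≤ 4γ`. -/

open Matrix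

/-- The ordered product `f j * f (j+1) * ⋯ * f (B-1)` (identity when `j ≥ B`). -/
noncomputable def ordProdFrom {d : ℕ} (f : ℕ → Matrix (Fin d) (Fin d) ℝ) (j B : ℕ) :
    Matrix (Fin d) (Fin d) ℝ :=
  (((List.range B).drop j).map f).prod

section OrdProd

variable {d : ℕ} (f : ℕ → Matrix (Fin d) (Fin d) ℝ)

lemma ordProdFrom_of_lt {j B : ℕ} (h : j < B) :
    ordProdFrom f j B = f j * ordProdFrom f (j + 1) B := by
  rw [ordProdFrom, List.drop_eq_getElem_cons (by simpa using h)]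
  simp [ordProdFrom]

lemma ordProdFrom_self (B : ℕ) : ordProdFrom f B B = 1 := by
  simp [ordProdFrom, List.drop_eq_nil_of_le]

theorem one_sub_transpose_mul_ordProdFrom (D : ℕ → Matrix (Fin d) (Fin d) ℝ) {B : ℕ}
    (hD : ∀ j < B, (f j)ᵀ * f j = 1 - D j) :
    1 - (ordProdFrom f 0 B)ᵀ * ordProdFrom f 0 B =
      ∑ j ∈ Finset.range B, (ordProdFrom f (j + 1) B)ᵀ * D j * ordProdFrom f (j + 1) B := by
  let P j := (ordProdFrom f j B)ᵀ * ordProdFrom f j B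
  have hstep : ∀ j < B, P (j + 1) - P j =
      (ordProdFrom f (j + 1) B)ᵀ * D j * ordProdFrom f (j + 1) B := by
    intro j hj
    have hD' : D j = 1 - (f j)ᵀ * f j := by rw [hD j hj, sub_sub_cancel]
    simp only [P, ordProdFrom_of_lt f hj, transpose_mul, hD', Matrix.mul_sub, Matrix.sub_mul,
      Matrix.mul_one, Matrix.mul_assoc]
  calc 1 - (ordProdFrom f 0 B)ᵀ * ordProdFrom f 0 B = P B - P 0 := by
        simp [P, ordProdFrom_self]
    _ = _ := by
      rw [← Finset.sum_range_sub]
      exact Finset.sum_congr rfl fun j hj => hstep j (Finset.mem_range.mp hj)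

end OrdProd

lemma transpose_mul_self_one_sub_smul_vecMulVec {n R : Type*} [Fintype n] [DecidableEq n]
    [CommRing R] (a : R) (v : n → R) :
    (1 - a • vecMulVec v v)ᵀ * (1 - a • vecMulVec v v) =
      1 - (a * (2 - a * (v ⬝ᵥ v))) • vecMulVec v v := by
  rw [transpose_sub, transpose_one, transpose_smul, transpose_vecMulVec]
  simp only [Matrix.sub_mul, Matrix.mul_sub, Matrix.one_mul, Matrix.mul_one, smul_mul_smul_comm,
    vecMulVec_mul_vecMulVec, vecMulVec_smul]
  module

lemma posSemidef_sum_smul_sub_sum_smul {n ι : Type*} {s : Finset ι} {a b : ι → ℝ}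
    {M : ι → Matrix n n ℝ} (hab : ∀ i ∈ s, a i ≤ b i) (hM : ∀ i ∈ s, (M i).PosSemidef) :
    (∑ i ∈ s, b i • M i - ∑ i ∈ s, a i • M i).PosSemidef := by
  rw [← Finset.sum_sub_distrib]
  refine posSemidef_sum s fun i hi => ?_
  rw [← sub_smul]
  exact (hM i hi).smul (sub_nonneg.mpr (hab i hi))

lemma posSemidef_transpose_mul_vecMulVec_mul {n : Type*} [Fintype n] (v : n → ℝ)
    (Q : Matrix n n ℝ) :
    (Qᵀ * vecMulVec v v * Q).PosSemidef := by
  simpa using (posSemidef_vecMulVec_self_star v).conjTranspose_mul_mul_same Q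

/-- With `H_{j:B-1} = ∏_{s=j}^{B-1}(I − 2γ x_s x_sᵀ)` and
`K = Σ_{j=0}^{B-1} H_{j+1:B-1}ᵀ x_j x_jᵀ H_{j+1:B-1}`, if `‖x_j‖² ≤ R` and `γR < 1/2`, then
`(I − H_{0:B-1}ᵀ H_{0:B-1})/(4γ) ⪯ K ⪯ (I − H_{0:B-1}ᵀ H_{0:B-1})/(4γ(1−γR))`. -/
theorem stmt_5 {d B : ℕ} (R γ : ℝ) (hγ : 0 < γ) (hγR : γ * R < 1 / 2)
    (x : ℕ → (Fin d → ℝ)) (hx : ∀ j < B, x j ⬝ᵥ x j ≤ R) :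
    let f : ℕ → Matrix (Fin d) (Fin d) ℝ :=
      fun s => 1 - (2 * γ) • vecMulVec (x s) (x s)
    let H := ordProdFrom f 0 B
    let K := ∑ j ∈ Finset.range B,
      (ordProdFrom f (j + 1) B)ᵀ * vecMulVec (x j) (x j) * ordProdFrom f (j + 1) B
    (K - (4 * γ)⁻¹ • ((1 : Matrix (Fin d) (Fin d) ℝ) - Hᵀ * H)).PosSemidef ∧
    ((4 * γ * (1 - γ * R))⁻¹ • ((1 : Matrix (Fin d) (Fin d) ℝ) - Hᵀ * H) - K).PosSemidef := by
  intro f H K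
  let c j := 2 * γ * (2 - 2 * γ * (x j ⬝ᵥ x j))
  let M j := (ordProdFrom f (j + 1) B)ᵀ * vecMulVec (x j) (x j) * ordProdFrom f (j + 1) B
  have hM j : (M j).PosSemidef := posSemidef_transpose_mul_vecMulVec_mul _ _
  have htel : 1 - Hᵀ * H = ∑ j ∈ Finset.range B, c j • M j := by
    rw [one_sub_transpose_mul_ordProdFrom f (fun j => c j • vecMulVec (x j) (x j))
      fun j _ => transpose_mul_self_one_sub_smul_vecMulVec _ _]
    simp only [Matrix.mul_smul, Matrix.smul_mul, M]
  have hK : K = ∑ j ∈ Finset.range B, (1 : ℝ) • M j := by simp only [one_smul, K, M]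
  have hxx j : 0 ≤ x j ⬝ᵥ x j := Finset.sum_nonneg fun i _ => mul_self_nonneg (x j i)
  rw [htel, hK, Finset.smul_sum, Finset.smul_sum]
  simp only [smul_smul]
  constructor
  · refine posSemidef_sum_smul_sub_sum_smul (fun j _ => ?_) fun j _ => hM j
    rw [inv_mul_le_iff₀ (by positivity)]
    nlinarith [hxx j, mul_pos hγ hγ]
  · refine posSemidef_sum_smul_sub_sum_smul (fun j hj => ?_) fun j _ => hM j
    have hR : 0 < 1 - γ * R := by linarith
    rw [le_inv_mul_iff₀ (by positivity)]
    nlinarith [hx j (Finset.mem_range.mp hj), mul_pos hγ hγ]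
end

section
/- Let G and H be d×d real matrices with G symmetric positive definite and H satisfying: H + H^T ⪯ 2(I − c γ B G) + c' γ B δ I, where c, c', γ, B > 0 and δ ≥ 0 with c' δ ≤ (c/2) σ_min(G). Then the matrix Q = G^{-1} − G^{-1/2} H G^{-1/2} has σ_min(Q) ≥ c'' γ B for a constant c'' > 0 depending only on c; consequently tr(G (I − H)^{-1}) ≤ d/(c'' γ B), provided I − H is invertible. -/
/-!
With `S = G^{1/2}` one has `Q = S⁻¹ (1 - H) S⁻¹`, so for `y = S⁻¹ v` the quadratic form of `Q` is
`vᵀQv = |y|² - yᵀHy`, while `yᵀGy = |v|²`. The hypothesis on `H + Hᵀ` therefore gives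
`vᵀQv ≥ cγB |v|² - (c'γBδ/2) |y|²`, and since `|y|² = vᵀG⁻¹v ≤ |v|² / σ_min(G)` the condition on
`c'δ` absorbs the error term: `vᵀQv ≥ (c/2)γB |v|²`. A matrix with such a coercive quadratic form
has `σ_min(Q) ≥ (c/2)γB` by Cauchy–Schwarz, and the diagonal entries of its inverse are at most
`2/(cγB)`, which bounds `tr(Q⁻¹) = tr(G(1 - H)⁻¹)`.
-/

open Matrix

section

open scoped ComplexOrder

/-- The positive semidefinite square root of a positive semidefinite matrix
(the definition removed from Mathlib, restored verbatim). -/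
noncomputable def Matrix.PosSemidef.sqrt {n 𝕜 : Type*} [Fintype n] [DecidableEq n] [RCLike 𝕜]
    {A : Matrix n n 𝕜} (hA : A.PosSemidef) : Matrix n n 𝕜 :=
  hA.1.eigenvectorUnitary.1 * diagonal ((↑) ∘ (√·) ∘ hA.1.eigenvalues) *
  (star hA.1.eigenvectorUnitary : Matrix n n 𝕜)

end

/-- Smallest singular value `σ_min(Q) = inf_{‖x‖=1} ‖Qx‖`. -/
noncomputable def sMin {d : ℕ} (Q : Matrix (Fin d) (Fin d) ℝ) : ℝ :=
  ⨅ x : {x : EuclideanSpace ℝ (Fin d) // ‖x‖ = 1},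
    ‖Matrix.toEuclideanCLM (𝕜 := ℝ) Q x.1‖

namespace Matrix.PosSemidef

open scoped ComplexOrder

variable {n 𝕜 : Type*} [Fintype n] [DecidableEq n] [RCLike 𝕜] {A : Matrix n n 𝕜}

lemma sqrt_mul_self (hA : A.PosSemidef) : hA.sqrt * hA.sqrt = A := by
  set U : Matrix n n 𝕜 := (hA.1.eigenvectorUnitary : Matrix n n 𝕜)
  have hU : star U * U = 1 := Unitary.coe_star_mul_self _
  conv_rhs => rw [hA.1.spectral_theorem, Unitary.conjStarAlgAut_apply]
  simp only [sqrt, Matrix.mul_assoc]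
  rw [← Matrix.mul_assoc (star U) U, hU, Matrix.one_mul, ← Matrix.mul_assoc (diagonal _),
    diagonal_mul_diagonal]
  congr 3
  funext i
  simp [← RCLike.ofReal_mul, Real.mul_self_sqrt (hA.eigenvalues_nonneg i)]

lemma isHermitian_sqrt (hA : A.PosSemidef) : hA.sqrt.IsHermitian :=
  isHermitian_mul_mul_conjTranspose _ (isHermitian_diagonal_of_self_adjoint _ (by ext; simp))

end Matrix.PosSemidef

namespace Matrix

variable {n : Type*} [Fintype n]

lemma dotProduct_transpose_mul_mul_mulVec {R : Type*} [CommSemiring R] (P A : Matrix n n R)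
    (v : n → R) : v ⬝ᵥ ((Pᵀ * A * P) *ᵥ v) = (P *ᵥ v) ⬝ᵥ (A *ᵥ (P *ᵥ v)) := by
  rw [← mulVec_mulVec, ← mulVec_mulVec, dotProduct_mulVec, vecMul_transpose]

lemma dotProduct_mulVec_le_of_posSemidef_sub {A B : Matrix n n ℝ} (h : (A - B).PosSemidef)
    (v : n → ℝ) : v ⬝ᵥ (B *ᵥ v) ≤ v ⬝ᵥ (A *ᵥ v) := by
  have := h.dotProduct_mulVec_nonneg v
  rw [star_trivial, sub_mulVec, dotProduct_sub] at this
  linarith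

variable [DecidableEq n]

lemma trace_inv_conj_inv {R : Type*} [CommRing R] {S : Matrix n n R} (hS : IsUnit S)
    (A : Matrix n n R) : (S⁻¹ * A * S⁻¹)⁻¹.trace = (S * S * A⁻¹).trace := by
  rw [mul_inv_rev, mul_inv_rev, nonsing_inv_nonsing_inv _ ((isUnit_iff_isUnit_det S).mp hS),
    ← Matrix.mul_assoc, trace_mul_cycle]

section coercive

variable {Q : Matrix n n ℝ} {k : ℝ}

lemma isUnit_of_coercive (hk : 0 < k) (hQ : ∀ v, k * (v ⬝ᵥ v) ≤ v ⬝ᵥ (Q *ᵥ v)) : IsUnit Q := by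
  refine mulVec_injective_iff_isUnit.mp fun v w hvw => sub_eq_zero.mp ?_
  have h := hQ (v - w)
  rw [mulVec_sub, hvw, sub_self, dotProduct_zero] at h
  exact dotProduct_self_eq_zero.mp
    (le_antisymm (nonpos_of_mul_nonpos_right h hk) (dotProduct_self_star_nonneg _))

/-- With `y = Q⁻¹ eᵢ`: `k yᵢ² ≤ k |y|² ≤ yᵀQy = yᵢ = (Q⁻¹)ᵢᵢ`. -/
lemma inv_apply_self_le_of_coercive (hk : 0 < k) (hQ : ∀ v, k * (v ⬝ᵥ v) ≤ v ⬝ᵥ (Q *ᵥ v))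
    (i : n) : Q⁻¹ i i ≤ k⁻¹ := by
  set y := Q⁻¹ *ᵥ Pi.single i 1
  have hQy : Q *ᵥ y = Pi.single i 1 := by
    rw [mulVec_mulVec, mul_nonsing_inv _ ((isUnit_iff_isUnit_det Q).mp (isUnit_of_coercive hk hQ)),
      one_mulVec]
  have hyi : y i = Q⁻¹ i i := by simp [y, mulVec_single]
  have hcoer : k * (y ⬝ᵥ y) ≤ y i := by simpa [hQy, dotProduct_single] using hQ y
  have hcoord : y i * y i ≤ y ⬝ᵥ y :=
    Finset.single_le_sum (f := fun j => y j * y j) (fun j _ => mul_self_nonneg _)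
      (Finset.mem_univ i)
  have hsq : k * (y i * y i) ≤ y i := (mul_le_mul_of_nonneg_left hcoord hk.le).trans hcoer
  rw [← hyi, inv_eq_one_div, le_div_iff₀ hk]
  nlinarith

lemma trace_inv_le_of_coercive (hk : 0 < k) (hQ : ∀ v, k * (v ⬝ᵥ v) ≤ v ⬝ᵥ (Q *ᵥ v)) :
    Q⁻¹.trace ≤ Fintype.card n / k := by
  calc Q⁻¹.trace = ∑ i, Q⁻¹ i i := rfl
    _ ≤ ∑ _i : n, k⁻¹ := Finset.sum_le_sum fun i _ => inv_apply_self_le_of_coercive hk hQ i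
    _ = Fintype.card n / k := by simp [div_eq_mul_inv]

end coercive

end Matrix

open WithLp EuclideanSpace

section sMin

variable {d : ℕ}

lemma sMin_nonneg (Q : Matrix (Fin d) (Fin d) ℝ) : 0 ≤ sMin Q :=
  Real.iInf_nonneg fun _ => norm_nonneg _

lemma sMin_mul_norm_le (Q : Matrix (Fin d) (Fin d) ℝ) (x : EuclideanSpace ℝ (Fin d)) :
    sMin Q * ‖x‖ ≤ ‖toEuclideanCLM (𝕜 := ℝ) Q x‖ := by
  rcases eq_or_ne x 0 with rfl | hx
  · simp
  have hbdd : BddBelow (Set.range fun y : {x : EuclideanSpace ℝ (Fin d) // ‖x‖ = 1} =>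
      ‖toEuclideanCLM (𝕜 := ℝ) Q y.1‖) := ⟨0, by rintro _ ⟨y, rfl⟩; exact norm_nonneg _⟩
  have h := ciInf_le hbdd ⟨‖x‖⁻¹ • x, norm_smul_inv_norm hx⟩
  rw [map_smul, norm_smul, norm_inv, norm_norm] at h
  rwa [← le_div_iff₀ (norm_pos_iff.mpr hx), div_eq_inv_mul]

lemma norm_sq_eq_dotProduct (x : EuclideanSpace ℝ (Fin d)) : ‖x‖ ^ 2 = ofLp x ⬝ᵥ ofLp x := by
  rw [← real_inner_self_eq_norm_sq, inner_eq_star_dotProduct, star_trivial]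

lemma le_sMin_of_coercive (hd : 0 < d) {Q : Matrix (Fin d) (Fin d) ℝ} {k : ℝ}
    (hQ : ∀ v, k * (v ⬝ᵥ v) ≤ v ⬝ᵥ (Q *ᵥ v)) : k ≤ sMin Q := by
  have : Nonempty {x : EuclideanSpace ℝ (Fin d) // ‖x‖ = 1} :=
    ⟨⟨single ⟨0, hd⟩ 1, by simp⟩⟩
  refine le_ciInf fun ⟨x, hx⟩ => ?_
  calc k = k * (ofLp x ⬝ᵥ ofLp x) := by rw [← norm_sq_eq_dotProduct, hx]; ring
    _ ≤ ofLp x ⬝ᵥ (Q *ᵥ ofLp x) := hQ _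
    _ = inner ℝ x (toEuclideanCLM (𝕜 := ℝ) Q x) := by
      rw [inner_eq_star_dotProduct, star_trivial, ofLp_toEuclideanCLM, dotProduct_comm]
    _ ≤ ‖x‖ * ‖toEuclideanCLM (𝕜 := ℝ) Q x‖ := real_inner_le_norm _ _
    _ = ‖toEuclideanCLM (𝕜 := ℝ) Q x‖ := by rw [hx, one_mul]

lemma sMin_mul_dotProduct_inv_mulVec_le {G : Matrix (Fin d) (Fin d) ℝ} (hG : IsUnit G)
    (v : Fin d → ℝ) : sMin G * (v ⬝ᵥ (G⁻¹ *ᵥ v)) ≤ v ⬝ᵥ v := by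
  set x : EuclideanSpace ℝ (Fin d) := toLp 2 v
  set z : EuclideanSpace ℝ (Fin d) := toLp 2 (G⁻¹ *ᵥ v)
  have hGz : toEuclideanCLM (𝕜 := ℝ) G z = x := by
    rw [toEuclideanCLM_toLp, mulVec_mulVec, mul_nonsing_inv _ ((isUnit_iff_isUnit_det G).mp hG),
      one_mulVec]
  have hcs : v ⬝ᵥ (G⁻¹ *ᵥ v) ≤ ‖x‖ * ‖z‖ := by
    simpa [x, z, inner_toLp_toLp, dotProduct_comm] using real_inner_le_norm x z
  have hσ : sMin G * ‖z‖ ≤ ‖x‖ := hGz ▸ sMin_mul_norm_le G z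
  calc sMin G * (v ⬝ᵥ (G⁻¹ *ᵥ v)) ≤ sMin G * (‖x‖ * ‖z‖) :=
        mul_le_mul_of_nonneg_left hcs (sMin_nonneg G)
    _ = ‖x‖ * (sMin G * ‖z‖) := by ring
    _ ≤ ‖x‖ * ‖x‖ := mul_le_mul_of_nonneg_left hσ (norm_nonneg x)
    _ = v ⬝ᵥ v := by rw [← sq, norm_sq_eq_dotProduct]

lemma mul_dotProduct_inv_mulVec_le_of_le_sMin {G : Matrix (Fin d) (Fin d) ℝ} (hG : G.PosDef)
    {r s : ℝ} (hs : 0 ≤ s) (h : r ≤ s * sMin G) (v : Fin d → ℝ) :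
    r * (v ⬝ᵥ (G⁻¹ *ᵥ v)) ≤ s * (v ⬝ᵥ v) := by
  have hg : 0 ≤ v ⬝ᵥ (G⁻¹ *ᵥ v) := by simpa using hG.posSemidef.inv.dotProduct_mulVec_nonneg v
  calc r * (v ⬝ᵥ (G⁻¹ *ᵥ v)) ≤ s * sMin G * (v ⬝ᵥ (G⁻¹ *ᵥ v)) := mul_le_mul_of_nonneg_right h hg
    _ = s * (sMin G * (v ⬝ᵥ (G⁻¹ *ᵥ v))) := mul_assoc _ _ _
    _ ≤ s * (v ⬝ᵥ v) := mul_le_mul_of_nonneg_left (sMin_mul_dotProduct_inv_mulVec_le hG.isUnit v) hs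

end sMin

lemma Matrix.coercive_conj_one_sub_of_posSemidef {n : Type*} [Fintype n] [DecidableEq n]
    {G H S : Matrix n n ℝ} {a b : ℝ} (hSS : S * S = G) (hSh : S.IsHermitian) (hS : IsUnit S)
    (hH : ((2 : ℝ) • (1 - a • G) + b • 1 - (H + Hᵀ)).PosSemidef)
    (hb : ∀ v, b * (v ⬝ᵥ (G⁻¹ *ᵥ v)) ≤ a * (v ⬝ᵥ v)) (v : n → ℝ) :
    a / 2 * (v ⬝ᵥ v) ≤ v ⬝ᵥ ((S⁻¹ * (1 - H) * S⁻¹) *ᵥ v) := by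
  have hSt : Sᵀ = S := by rw [← conjTranspose_eq_transpose_of_trivial, hSh.eq]
  have hSinvt : (S⁻¹)ᵀ = S⁻¹ := by rw [transpose_nonsing_inv, hSt]
  set y := S⁻¹ *ᵥ v
  have hQ : v ⬝ᵥ ((S⁻¹ * (1 - H) * S⁻¹) *ᵥ v) = y ⬝ᵥ y - y ⬝ᵥ (H *ᵥ y) := by
    have := dotProduct_transpose_mul_mul_mulVec S⁻¹ (1 - H) v
    rwa [hSinvt, sub_mulVec, one_mulVec, dotProduct_sub] at this
  have hGinv : v ⬝ᵥ (G⁻¹ *ᵥ v) = y ⬝ᵥ y := by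
    have : G⁻¹ = (S⁻¹)ᵀ * 1 * S⁻¹ := by rw [hSinvt, Matrix.mul_one, ← hSS, mul_inv_rev]
    rw [this, dotProduct_transpose_mul_mul_mulVec, one_mulVec]
  have hG : y ⬝ᵥ (G *ᵥ y) = v ⬝ᵥ v := by
    have hSy : S *ᵥ y = v := by
      rw [mulVec_mulVec, mul_nonsing_inv _ ((isUnit_iff_isUnit_det S).mp hS), one_mulVec]
    have := dotProduct_transpose_mul_mul_mulVec S 1 y
    rwa [hSt, Matrix.mul_one, hSS, one_mulVec, hSy] at this
  have hHt : y ⬝ᵥ (Hᵀ *ᵥ y) = y ⬝ᵥ (H *ᵥ y) := by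
    rw [dotProduct_mulVec, vecMul_transpose, dotProduct_comm]
  have hbound := dotProduct_mulVec_le_of_posSemidef_sub hH y
  simp only [add_mulVec, sub_mulVec, smul_mulVec, one_mulVec, dotProduct_add, dotProduct_sub,
    dotProduct_smul, smul_eq_mul, hHt, hG] at hbound
  have := hb v
  rw [hGinv] at this
  linarith

/-- If `H + Hᵀ ⪯ 2(I − cγB G) + c'γBδ I` with `c'δ ≤ (c/2)σ_min(G)`, then
`Q = G⁻¹ − G^{-1/2} H G^{-1/2}` has `σ_min(Q) ≥ c''γB` for a constant `c'' > 0` depending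
only on `c`; consequently `tr(G(I−H)⁻¹) ≤ d/(c''γB)` provided `I − H` is invertible. -/
theorem stmt_17 (c : ℝ) (hc : 0 < c) :
    ∃ c'' : ℝ, 0 < c'' ∧
      ∀ (d : ℕ), 0 < d →
      ∀ (G H : Matrix (Fin d) (Fin d) ℝ) (hG : G.PosDef),
      ∀ c' γ B δ : ℝ, 0 < c' → 0 < γ → 0 < B → 0 ≤ δ →
      (((2 : ℝ) • ((1 : Matrix (Fin d) (Fin d) ℝ) - (c * γ * B) • G) +
          (c' * γ * B * δ) • (1 : Matrix (Fin d) (Fin d) ℝ)) - (H + Hᵀ)).PosSemidef →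
      c' * δ ≤ (c / 2) * sMin G →
      sMin (G⁻¹ - hG.posSemidef.sqrt⁻¹ * H * hG.posSemidef.sqrt⁻¹) ≥ c'' * γ * B ∧
      (IsUnit ((1 : Matrix (Fin d) (Fin d) ℝ) - H) →
        (G * ((1 : Matrix (Fin d) (Fin d) ℝ) - H)⁻¹).trace ≤ (d : ℝ) / (c'' * γ * B)) := by
  refine ⟨c / 2, half_pos hc, fun d hd G H hG c' γ B δ _ hγ hB _ hH hσ => ?_⟩
  set S := hG.posSemidef.sqrt
  have hSS : S * S = G := hG.posSemidef.sqrt_mul_self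
  have hS : IsUnit S := by
    have hG' := hG.isUnit
    rw [isUnit_iff_isUnit_det] at hG' ⊢
    exact isUnit_of_mul_isUnit_left (by rwa [← det_mul, hSS])
  have hQ : G⁻¹ - S⁻¹ * H * S⁻¹ = S⁻¹ * (1 - H) * S⁻¹ := by
    rw [← hSS, Matrix.mul_inv_rev]; noncomm_ring
  have hb : c' * γ * B * δ ≤ c * γ * B * sMin G := by
    nlinarith [mul_le_mul_of_nonneg_left hσ (mul_pos hγ hB).le,
      mul_nonneg (mul_pos (mul_pos hc hγ) hB).le (sMin_nonneg G)]
  have hcoer : ∀ v, c / 2 * γ * B * (v ⬝ᵥ v) ≤ v ⬝ᵥ ((G⁻¹ - S⁻¹ * H * S⁻¹) *ᵥ v) := fun v => by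
    rw [hQ]
    convert coercive_conj_one_sub_of_posSemidef hSS hG.posSemidef.isHermitian_sqrt hS hH
      (mul_dotProduct_inv_mulVec_le_of_le_sMin hG (by positivity) hb) v using 1
    ring
  refine ⟨le_sMin_of_coercive hd hcoer, fun _ => ?_⟩
  rw [← hSS, ← trace_inv_conj_inv hS, ← hQ]
  simpa using trace_inv_le_of_coercive (by positivity) hcoer
end
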